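/- In the randomized response matrix model, assume additionally that Θ has all entries in {1,…,d}, that ‖P_{Ω_X}(Θ − X)‖_F ≤ ρ₀√s for some constant ρ₀ ≥ 0, where s = |Ω_X| ≤ mn, and let γ ∈ (0,1). Then with probability at least 1 − γ, ρ := ‖P_{Ω_Z}(Θ − Z)‖_F ≤ ρ₀√s + 2(d−1)·√( 2mnd/((e^ε + d)γ) ). -/

import Mathlib

open Real

/-- Probability mass function of the randomized response mechanism on `W = {0,1,…,d}`:
`pᵢ(j) = exp(ε)^{𝟙(j=i)} / (exp ε + d)`. -/
noncomputable def rrProb (ε : ℝ) (d : ℕ) (i j : Fin (d + 1)) : ℝ :=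
  (if j = i then Real.exp ε else 1) / (Real.exp ε + d)

/-- Probability that the randomized response mechanism, applied independently to every entry
of the rating matrix `X` (entries in `W = {0,1,…,d}`, `0` encoding a missing rating),
outputs the matrix `Z`. -/
noncomputable def rrMatrixProb (ε : ℝ) (d : ℕ) {m n : ℕ}
    (X Z : Fin m × Fin n → Fin (d + 1)) : ℝ :=
  ∏ p, rrProb ε d (X p) (Z p)

/-- Support of the non-missing (nonzero) entries of a matrix with entries in `{0,1,…,d}`. -/
def suppOf {m n d : ℕ} (A : Fin m × Fin n → Fin (d + 1)) : Finset (Fin m × Fin n) :=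
  Finset.univ.filter fun p => A p ≠ 0

/-!
Let `N` be the number of entries changed by the mechanism. Entries of `Ω_Z` where `Z` agrees
with `X` contribute at most `‖P_{Ω_X}(Θ − X)‖_F²` in total, and each changed entry at most
`(d − 1)²`, because `Θ` and a non-missing `Z` both take values in `{1,…,d}`; hence
`ρ ≤ ρ₀√s + (d − 1)√N`. Every entry changes with probability `d/(e^ε + d)`, so
`𝔼N = mnd/(e^ε + d)`, and by Markov's inequality `N ≤ 𝔼N/γ` with probability at least `1 − γ`.
-/

theorem Real.sqrt_add_le_add_sqrt {a b : ℝ} (ha : 0 ≤ a) (hb : 0 ≤ b) : √(a + b) ≤ √a + √b := by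
  rw [Real.sqrt_le_left (by positivity), add_sq, Real.sq_sqrt ha, Real.sq_sqrt hb]
  nlinarith [Real.sqrt_nonneg a, Real.sqrt_nonneg b]

/-- Markov's inequality: `P(f > 𝔼 f / δ) ≤ δ`. -/
theorem Finset.sum_filter_div_lt_le {ι : Type*} (s : Finset ι) {w f : ι → ℝ}
    (hw : ∀ i ∈ s, 0 ≤ w i) (hf : ∀ i ∈ s, 0 ≤ f i) {δ : ℝ} (hδ : 0 < δ) :
    ∑ i ∈ s with (∑ j ∈ s, f j * w j) / δ < f i, w i ≤ δ := by
  have hfw : ∀ i ∈ s, 0 ≤ f i * w i := fun i hi => mul_nonneg (hf i hi) (hw i hi)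
  have hE0 := Finset.sum_nonneg hfw
  generalize hE : ∑ j ∈ s, f j * w j = E at hE0 ⊢
  rcases hE0.eq_or_lt with rfl | hE0
  · have hw0 : ∀ i ∈ s.filter (0 / δ < f ·), w i = 0 := by
      intro i hi
      rw [Finset.mem_filter, zero_div] at hi
      have := (Finset.sum_eq_zero_iff_of_nonneg hfw).mp hE i hi.1
      exact (mul_eq_zero.mp this).resolve_left hi.2.ne'
    rw [Finset.sum_eq_zero hw0]
    exact hδ.le
  · refine le_of_mul_le_mul_right ?_ hE0
    calc (∑ i ∈ s with E / δ < f i, w i) * E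
        ≤ ∑ i ∈ s with E / δ < f i, δ * (f i * w i) := by
          rw [Finset.sum_mul]
          refine Finset.sum_le_sum fun i hi => ?_
          rw [Finset.mem_filter, div_lt_iff₀' hδ] at hi
          nlinarith [hw i hi.1]
      _ ≤ δ * E := by
          rw [← Finset.mul_sum, ← hE]
          exact mul_le_mul_of_nonneg_left
            (Finset.sum_le_sum_of_subset_of_nonneg (Finset.filter_subset _ _)
              fun i hi _ => hfw i hi) hδ.le

/-- The `i`-th marginal of a product of probability vectors `μ j` is `μ i`. -/
theorem Fintype.sum_mul_prod_of_sum_eq_one {ι κ R : Type*} [Fintype ι] [DecidableEq ι]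
    [Fintype κ] [CommSemiring R] (μ : ι → κ → R) (hμ : ∀ i, ∑ k, μ i k = 1) (i : ι)
    (g : κ → R) :
    ∑ x : ι → κ, g (x i) * ∏ j, μ j (x j) = ∑ k, g k * μ i k := by
  -- folding `g` into the `i`-th factor turns the sum back into a product of sums
  set ν := Function.update μ i fun k => g k * μ i k
  have hν : ∀ x : ι → κ, g (x i) * ∏ j, μ j (x j) = ∏ j, ν j (x j) := by
    intro x
    rw [Fintype.prod_eq_mul_prod_compl i, Fintype.prod_eq_mul_prod_compl i, ← mul_assoc]
    refine congrArg₂ _ (by simp [ν]) (Finset.prod_congr rfl fun j hj => ?_)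
    rw [Finset.mem_compl, Finset.mem_singleton] at hj
    simp [ν, Function.update_of_ne hj]
  simp_rw [hν, ← Fintype.prod_sum, Fintype.prod_eq_mul_prod_compl i]
  rw [Finset.prod_eq_one fun j hj => ?_]
  · simp [ν]
  · rw [Finset.mem_compl, Finset.mem_singleton] at hj
    simp [ν, Function.update_of_ne hj, hμ]

section RandomizedResponse

variable (ε : ℝ) (d : ℕ)

theorem rrProb_nonneg (i j : Fin (d + 1)) : 0 ≤ rrProb ε d i j := by
  unfold rrProb
  split_ifs <;> positivity

theorem sum_filter_ne_rrProb (i : Fin (d + 1)) :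
    ∑ j with j ≠ i, rrProb ε d i j = d / (Real.exp ε + d) := by
  rw [Finset.sum_congr rfl fun j hj => by
    rw [rrProb, if_neg (Finset.mem_filter.mp hj).2]]
  simp [Finset.filter_ne', div_eq_mul_inv]

theorem sum_rrProb (i : Fin (d + 1)) : ∑ j, rrProb ε d i j = 1 := by
  rw [← Finset.add_sum_erase _ _ (Finset.mem_univ i), ← Finset.filter_ne', sum_filter_ne_rrProb,
    rrProb, if_pos rfl, ← add_div, div_self (by positivity)]

variable {m n : ℕ}

theorem rrMatrixProb_nonneg (X Z : Fin m × Fin n → Fin (d + 1)) : 0 ≤ rrMatrixProb ε d X Z :=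
  Finset.prod_nonneg fun p _ => rrProb_nonneg ε d (X p) (Z p)

theorem sum_rrMatrixProb (X : Fin m × Fin n → Fin (d + 1)) :
    ∑ Z, rrMatrixProb ε d X Z = 1 := by
  simp [rrMatrixProb, ← Fintype.prod_sum, sum_rrProb]

theorem sum_hammingDist_mul_rrMatrixProb (X : Fin m × Fin n → Fin (d + 1)) :
    ∑ Z, (hammingDist Z X : ℝ) * rrMatrixProb ε d X Z = m * n * (d / (Real.exp ε + d)) := by
  have hflip (p : Fin m × Fin n) :
      ∑ Z, (if Z p ≠ X p then (1 : ℝ) else 0) * rrMatrixProb ε d X Z = d / (Real.exp ε + d) := by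
    rw [← sum_filter_ne_rrProb ε d (X p), Finset.sum_filter]
    simpa [ite_mul, rrMatrixProb] using
      Fintype.sum_mul_prod_of_sum_eq_one (fun q => rrProb ε d (X q))
        (fun q => sum_rrProb ε d (X q)) p fun k => if k ≠ X p then 1 else 0
  calc ∑ Z, (hammingDist Z X : ℝ) * rrMatrixProb ε d X Z
      = ∑ Z, ∑ p, (if Z p ≠ X p then (1 : ℝ) else 0) * rrMatrixProb ε d X Z := by
        simp [hammingDist, Finset.card_filter, Finset.sum_mul]
    _ = ∑ p : Fin m × Fin n, d / (Real.exp ε + d) := by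
        rw [Finset.sum_comm]
        exact Finset.sum_congr rfl fun p _ => hflip p
    _ = m * n * (d / (Real.exp ε + d)) := by simp

theorem sum_filter_lt_hammingDist_rrMatrixProb_le (X : Fin m × Fin n → Fin (d + 1)) {γ : ℝ}
    (hγ : 0 < γ) :
    ∑ Z with m * n * (d / (Real.exp ε + d)) / γ < (hammingDist Z X : ℝ), rrMatrixProb ε d X Z
      ≤ γ := by
  simpa [sum_hammingDist_mul_rrMatrixProb] using Finset.sum_filter_div_lt_le Finset.univ
    (w := rrMatrixProb ε d X) (f := fun Z => hammingDist Z X)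
    (fun Z _ => rrMatrixProb_nonneg ε d X Z) (fun Z _ => Nat.cast_nonneg _) hγ

end RandomizedResponse

section ObservationError

variable {m n d : ℕ}

/-- `‖P_{Ω_A}(Θ − A)‖_F`. -/
noncomputable def observationError (Θ A : Fin m × Fin n → Fin (d + 1)) : ℝ :=
  √(∑ p ∈ suppOf A, (((Θ p : ℕ) : ℝ) - ((A p : ℕ) : ℝ)) ^ 2)

theorem sq_val_sub_val_le {a b : Fin (d + 1)} (ha : a ≠ 0) (hb : b ≠ 0) :
    (((a : ℕ) : ℝ) - ((b : ℕ) : ℝ)) ^ 2 ≤ ((d : ℝ) - 1) ^ 2 := by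
  have ha₁ : (1 : ℝ) ≤ (a : ℕ) := mod_cast Nat.pos_of_ne_zero (Fin.val_ne_zero_iff.mpr ha)
  have hb₁ : (1 : ℝ) ≤ (b : ℕ) := mod_cast Nat.pos_of_ne_zero (Fin.val_ne_zero_iff.mpr hb)
  have ha₂ : ((a : ℕ) : ℝ) ≤ d := mod_cast a.is_le
  have hb₂ : ((b : ℕ) : ℝ) ≤ d := mod_cast b.is_le
  exact sq_le_sq' (by linarith) (by linarith)

theorem observationError_le_add_hammingDist (hd : 1 ≤ d) {Θ : Fin m × Fin n → Fin (d + 1)}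
    (hΘ : ∀ p, Θ p ≠ 0) (X Z : Fin m × Fin n → Fin (d + 1)) :
    observationError Θ Z ≤ observationError Θ X + (d - 1) * √(hammingDist Z X) := by
  have hd₁ : (0 : ℝ) ≤ d - 1 := by
    rw [sub_nonneg]
    exact_mod_cast hd
  unfold observationError
  rw [← Finset.sum_filter_add_sum_filter_not (suppOf Z) (fun p => Z p = X p)]
  refine (Real.sqrt_add_le_add_sqrt (by positivity) (by positivity)).trans (add_le_add ?_ ?_)
  · refine Real.sqrt_le_sqrt ?_
    calc ∑ p ∈ suppOf Z with Z p = X p, (((Θ p : ℕ) : ℝ) - ((Z p : ℕ) : ℝ)) ^ 2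
        = ∑ p ∈ suppOf X with Z p = X p, (((Θ p : ℕ) : ℝ) - ((X p : ℕ) : ℝ)) ^ 2 := by
          refine Finset.sum_congr ?_ fun p hp => by rw [(Finset.mem_filter.mp hp).2]
          ext p
          simp only [suppOf, Finset.mem_filter, Finset.mem_univ, true_and]
          exact and_congr_left fun h => by rw [h]
      _ ≤ ∑ p ∈ suppOf X, (((Θ p : ℕ) : ℝ) - ((X p : ℕ) : ℝ)) ^ 2 :=
          Finset.sum_le_sum_of_subset_of_nonneg (Finset.filter_subset _ _)
            fun _ _ _ => sq_nonneg _
  · rw [← Real.sqrt_sq hd₁, ← Real.sqrt_mul (sq_nonneg _)]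
    refine Real.sqrt_le_sqrt ?_
    calc ∑ p ∈ suppOf Z with ¬Z p = X p, (((Θ p : ℕ) : ℝ) - ((Z p : ℕ) : ℝ)) ^ 2
        ≤ ((suppOf Z).filter fun p => ¬Z p = X p).card • ((d : ℝ) - 1) ^ 2 :=
          Finset.sum_le_card_nsmul _ _ _ fun p hp =>
            sq_val_sub_val_le (hΘ p) (Finset.mem_filter.mp (Finset.mem_filter.mp hp).1).2
      _ ≤ ((d : ℝ) - 1) ^ 2 * hammingDist Z X := by
          rw [nsmul_eq_mul, mul_comm]
          gcongr
          exact Finset.card_le_card (Finset.filter_subset_filter _ (Finset.subset_univ _))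

theorem sq_lt_hammingDist_of_lt_observationError (hd : 1 ≤ d)
    {Θ X Z : Fin m × Fin n → Fin (d + 1)} (hΘ : ∀ p, Θ p ≠ 0) {c r : ℝ}
    (hX : observationError Θ X ≤ c) (hr : 0 ≤ r)
    (hZ : c + (d - 1) * r < observationError Θ Z) :
    r ^ 2 < hammingDist Z X := by
  have hd₁ : (0 : ℝ) ≤ d - 1 := by
    rw [sub_nonneg]
    exact_mod_cast hd
  have hr_lt : r < √(hammingDist Z X) := lt_of_mul_lt_mul_left (by
    linarith [observationError_le_add_hammingDist hd hΘ X Z]) hd₁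
  exact (Real.lt_sqrt hr).mp hr_lt

end ObservationError

open scoped Classical in
theorem rr_observation_error_bound_general (ε : ℝ) (d : ℕ) (hd : 1 ≤ d) (m n : ℕ)
    (Θ : Fin m × Fin n → Fin (d + 1)) (hΘ : ∀ p, Θ p ≠ 0)
    (X : Fin m × Fin n → Fin (d + 1))
    (ρ₀ : ℝ)
    (hclose : Real.sqrt (∑ p ∈ suppOf X, (((Θ p : ℕ) : ℝ) - ((X p : ℕ) : ℝ)) ^ 2) ≤
      ρ₀ * Real.sqrt ((suppOf X).card))
    (γ : ℝ) (hγ : γ ∈ Set.Ioo (0 : ℝ) 1) :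
    1 - γ ≤
      ∑ Z : Fin m × Fin n → Fin (d + 1),
        if Real.sqrt (∑ p ∈ suppOf Z, (((Θ p : ℕ) : ℝ) - ((Z p : ℕ) : ℝ)) ^ 2) ≤
            ρ₀ * Real.sqrt ((suppOf X).card) +
              2 * ((d : ℝ) - 1) *
                Real.sqrt (2 * (m : ℝ) * n * d / ((Real.exp ε + d) * γ))
        then rrMatrixProb ε d X Z else 0 := by
  obtain ⟨hγ₀, -⟩ := hγ
  set t := 2 * (m : ℝ) * n * d / ((Real.exp ε + d) * γ)
  set good := fun Z =>
    observationError Θ Z ≤ ρ₀ * √((suppOf X).card) + 2 * ((d : ℝ) - 1) * √t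
  change 1 - γ ≤ ∑ Z, if good Z then rrMatrixProb ε d X Z else 0
  change observationError Θ X ≤ _ at hclose
  have hmean : m * n * (d / (Real.exp ε + d)) / γ ≤ (2 * √t) ^ 2 := by
    rw [mul_pow, Real.sq_sqrt (by positivity)]
    have : m * n * (d / (Real.exp ε + d)) / γ = t / 2 := by
      simp only [t]
      field_simp
    linarith [show 0 ≤ t by positivity]
  have hbad (Z : Fin m × Fin n → Fin (d + 1)) (hZ : ¬good Z) :
      m * n * (d / (Real.exp ε + d)) / γ < hammingDist Z X :=
    hmean.trans_lt <| sq_lt_hammingDist_of_lt_observationError hd hΘ hclose (by positivity)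
      (by linarith [not_le.mp hZ])
  have hbad_prob : ∑ Z with ¬good Z, rrMatrixProb ε d X Z ≤ γ :=
    (Finset.sum_le_sum_of_subset_of_nonneg (Finset.monotone_filter_right _ fun Z _ => hbad Z)
      fun Z _ _ => rrMatrixProb_nonneg ε d X Z).trans
      (sum_filter_lt_hammingDist_rrMatrixProb_le ε d X hγ₀)
  rw [← Finset.sum_filter]
  linarith [Finset.sum_filter_add_sum_filter_not Finset.univ good (rrMatrixProb ε d X),
    sum_rrMatrixProb ε d X]

open scoped Classical in
/-- Randomized response matrix model: if `Θ` has entries in `{1,…,d}` and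
`‖P_{Ω_X}(Θ − X)‖_F ≤ ρ₀√s` with `s = |Ω_X| ≤ mn`, then for any `γ ∈ (0,1)`, with probability
at least `1 − γ`, `‖P_{Ω_Z}(Θ − Z)‖_F ≤ ρ₀√s + 2(d−1)√(2mnd/((e^ε + d)γ))`. -/
theorem rr_observation_error_bound (ε : ℝ) (hε : 0 ≤ ε) (d : ℕ) (hd : 1 ≤ d) (m n : ℕ)
    (Θ : Fin m × Fin n → Fin (d + 1)) (hΘ : ∀ p, Θ p ≠ 0)
    (X : Fin m × Fin n → Fin (d + 1))
    (hs : (suppOf X).card ≤ m * n)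
    (ρ₀ : ℝ) (hρ₀ : 0 ≤ ρ₀)
    (hclose : Real.sqrt (∑ p ∈ suppOf X, (((Θ p : ℕ) : ℝ) - ((X p : ℕ) : ℝ)) ^ 2) ≤
      ρ₀ * Real.sqrt ((suppOf X).card))
    (γ : ℝ) (hγ : γ ∈ Set.Ioo (0 : ℝ) 1) :
    1 - γ ≤
      ∑ Z : Fin m × Fin n → Fin (d + 1),
        if Real.sqrt (∑ p ∈ suppOf Z, (((Θ p : ℕ) : ℝ) - ((Z p : ℕ) : ℝ)) ^ 2) ≤
            ρ₀ * Real.sqrt ((suppOf X).card) +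
              2 * ((d : ℝ) - 1) *
                Real.sqrt (2 * (m : ℝ) * n * d / ((Real.exp ε + d) * γ))
        then rrMatrixProb ε d X Z else 0 :=
  rr_observation_error_bound_general ε d hd m n Θ hΘ X ρ₀ hclose γ hγ
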